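/- arXiv:1205.6729 — 4 statements merged into one kernel-verified Lean document; each statement's English description precedes it below -/
import Mathlib

section
/- Let X be a Tychonoff space and let P be either pseudocompactness, or a closed hereditary topological property that is preserved under finite closed sums of subspaces. For a one-point Tychonoff extension Y of X, the following are equivalent: (1) Y is a P-far extension of X; (2) Θ_X(Y) ⊆ βX\λ_P X. -/
open Set Topology Filter

universe u

/-- A one-point Tychonoff extension of `X`: a Tychonoff space containing (a homeomorphic copy
of) `X` as a dense subspace whose complement is a single point `pt`. -/
structure OnePointExt (X : Type u) [TopologicalSpace X] : Type (u + 1) where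
  carrier : Type u
  top : TopologicalSpace carrier
  t35 : @T35Space carrier top
  ι : X → carrier
  emb : @Topology.IsEmbedding X carrier _ top ι
  pt : carrier
  range_eq : Set.range ι = {pt}ᶜ
  dense : @DenseRange carrier top X ι

attribute [instance] OnePointExt.top OnePointExt.t35

variable {X : Type u} [TopologicalSpace X]

/-- The partial order on one-point extensions: `Y₁ ≤ Y₂` iff there is a continuous map from
`Y₂` into `Y₁` fixing `X` pointwise. -/
def OnePointExt.le (Y1 Y2 : OnePointExt X) : Prop :=
  ∃ f : Y2.carrier → Y1.carrier, Continuous f ∧ ∀ x, f (Y2.ι x) = Y1.ι x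

/-- Equivalence of extensions: a homeomorphism fixing `X` pointwise. -/
def OnePointExt.equiv (Y1 Y2 : OnePointExt X) : Prop :=
  ∃ h : Y1.carrier ≃ₜ Y2.carrier, ∀ x, h (Y1.ι x) = Y2.ι x

/-- `τ_Y : βX → βY`, the unique continuous extension of `id_X`. -/
noncomputable def OnePointExt.tau (Y : OnePointExt X) : StoneCech X → StoneCech Y.carrier :=
  stoneCechExtend (continuous_stoneCechUnit.comp Y.emb.continuous)

/-- `Θ_X(Y) = τ_Y⁻¹(Y \ X)`, a subset of `βX`. -/
noncomputable def OnePointExt.theta (Y : OnePointExt X) : Set (StoneCech X) :=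
  Y.tau ⁻¹' {stoneCechUnit Y.pt}

/-- A zero-set: `f⁻¹(0)` for a continuous `f : Z → [0,1]`. -/
def IsZeroSet {Z : Type u} [TopologicalSpace Z] (A : Set Z) : Prop :=
  ∃ f : Z → unitInterval, Continuous f ∧ A = f ⁻¹' {0}

/-- A cozero-set: a complement of a zero-set. -/
def IsCozeroSet {Z : Type u} [TopologicalSpace Z] (A : Set Z) : Prop :=
  ∃ f : Z → unitInterval, Continuous f ∧ A = (f ⁻¹' {0})ᶜ

/-- `λ_P X = ⋃ { int_{βX} cl_{βX} C : C a cozero-set of X whose closure in X has P }`. -/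
def lambdaP (P : (Z : Type u) → [TopologicalSpace Z] → Prop) (X : Type u)
    [TopologicalSpace X] : Set (StoneCech X) :=
  ⋃ C ∈ {C : Set X | IsCozeroSet C ∧ P (closure C)},
    interior (closure (stoneCechUnit '' C))

/-- A pseudocompact space: every continuous real-valued function is bounded. -/
def Pseudocompact (Z : Type u) [TopologicalSpace Z] : Prop :=
  ∀ f : Z → ℝ, Continuous f → ∃ M, ∀ z, |f z| ≤ M

/-- `P` is a topological property: it is invariant under homeomorphisms. -/
def TopProperty (P : (Z : Type u) → [TopologicalSpace Z] → Prop) : Prop :=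
  ∀ (Z W : Type u) [TopologicalSpace Z] [TopologicalSpace W], Z ≃ₜ W → P Z → P W

/-- `P` is closed hereditary: closed subspaces of a space with `P` have `P`. -/
def ClosedHereditary (P : (Z : Type u) → [TopologicalSpace Z] → Prop) : Prop :=
  ∀ (Z : Type u) [TopologicalSpace Z], P Z → ∀ F : Set Z, IsClosed F → P F

/-- `P` is preserved under finite closed sums of subspaces. -/
def FiniteClosedSums (P : (Z : Type u) → [TopologicalSpace Z] → Prop) : Prop :=
  ∀ (Z : Type u) [TopologicalSpace Z] [T2Space Z] (n : ℕ) (F : Fin n → Set Z),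
    (∀ i, IsClosed (F i)) → (∀ i, P (F i)) → (⋃ i, F i) = univ → P Z

/-- `P` is preserved under locally finite closed sums of subspaces. -/
def LocallyFiniteClosedSums (P : (Z : Type u) → [TopologicalSpace Z] → Prop) : Prop :=
  ∀ (Z : Type u) [TopologicalSpace Z] [T2Space Z] (ι : Type u) (F : ι → Set Z),
    LocallyFinite F → (∀ i, IsClosed (F i)) → (∀ i, P (F i)) → (⋃ i, F i) = univ → P Z

/-- `P` is preserved under countable closed sums of subspaces. -/
def CountableClosedSums (P : (Z : Type u) → [TopologicalSpace Z] → Prop) : Prop :=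
  ∀ (Z : Type u) [TopologicalSpace Z] [T2Space Z] (F : ℕ → Set Z),
    (∀ i, IsClosed (F i)) → (∀ i, P (F i)) → (⋃ i, F i) = univ → P Z

/-- Mrówka's condition (W): if a Tychonoff space `T` has a point `p` with an open base `B` at
`p` such that `T \ b` has `P` for each `b ∈ B`, then `T` has `P`. -/
def MrowkaW (P : (Z : Type u) → [TopologicalSpace Z] → Prop) : Prop :=
  ∀ (T : Type u) [TopologicalSpace T] [T35Space T] (p : T) (B : Set (Set T)),
    (∀ b ∈ B, IsOpen b ∧ p ∈ b) →
    (∀ V : Set T, IsOpen V → p ∈ V → ∃ b ∈ B, b ⊆ V) →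
    (∀ b ∈ B, P (↥(bᶜ))) → P T

/-- `X` is locally-P: every point has an open neighborhood whose closure has `P`. -/
def LocallyP (P : (Z : Type u) → [TopologicalSpace Z] → Prop)
    (X : Type u) [TopologicalSpace X] : Prop :=
  ∀ x : X, ∃ U : Set X, IsOpen U ∧ x ∈ U ∧ P (closure U)

/-- `P` coincides with pseudocompactness. -/
def IsPseudocompactness (P : (Z : Type u) → [TopologicalSpace Z] → Prop) : Prop :=
  ∀ (Z : Type u) [TopologicalSpace Z], P Z ↔ Pseudocompact Z

/-- A `P`-far one-point extension: for every zero-set `Z` of `X` contained in a cozero-set `C`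
of `X` whose closure has `P`, the closure of `Z` in the extension misses the remainder. -/
def OnePointExt.PFar (P : (Z : Type u) → [TopologicalSpace Z] → Prop)
    (Y : OnePointExt X) : Prop :=
  ∀ Z C : Set X, IsZeroSet Z → IsCozeroSet C → P (closure C) → Z ⊆ C →
    Y.pt ∉ closure (Y.ι '' Z)

/-- Čech-complete: `Z` is a Gδ-set in `βZ`. -/
def CechComplete (Z : Type u) [TopologicalSpace Z] : Prop :=
  IsGδ (Set.range (stoneCechUnit : Z → StoneCech Z))

/-- The extension is first countable at the added point. -/
def OnePointExt.FirstCountableAtPt (Y : OnePointExt X) : Prop :=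
  (𝓝 Y.pt).IsCountablyGenerated

/-- Strong zero-dimensionality: `βX` has an open base of clopen sets. -/
def StronglyZeroDimensional (X : Type u) [TopologicalSpace X] : Prop :=
  ∀ U : Set (StoneCech X), IsOpen U → ∀ x ∈ U,
    ∃ V : Set (StoneCech X), IsClopen V ∧ x ∈ V ∧ V ⊆ U

/-- `Δ` is an order-isomorphism from the subset `A` of one-point extensions of `X` (with the
order `≤`) onto the subset `B` of one-point extensions of `Y`, where extensions are regarded
up to the equivalence `OnePointExt.equiv`: `Δ` maps `A` into `B`, reflects and preserves `≤`
on `A`, and every member of `B` is equivalent to the image of a member of `A`. -/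
def RestrictedOrderIso {X Y : Type u} [TopologicalSpace X] [TopologicalSpace Y]
    (A : Set (OnePointExt X)) (B : Set (OnePointExt Y))
    (Δ : OnePointExt X → OnePointExt Y) : Prop :=
  (∀ T ∈ A, Δ T ∈ B) ∧
  (∀ T1 ∈ A, ∀ T2 ∈ A, (T1.le T2 ↔ (Δ T1).le (Δ T2))) ∧
  (∀ S ∈ B, ∃ T ∈ A, (Δ T).equiv S)

/-! `τ_Y` maps `cl_{βX} Z` onto `cl_{βY} Z`, so the added point lies in `cl_Y Z` exactly when
`cl_{βX} Z` meets `Θ_X(Y)`. A zero-set inside a cozero-set `C` has its `βX`-closure inside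
`int_{βX} cl_{βX} C`; conversely, every point of `int_{βX} cl_{βX} C` lies in the `βX`-closure of a
zero-set contained in a cozero-set `C'` with `cl_X C' ⊆ cl_X C`, and `cl_X C'`, being regular
closed in `cl_X C`, inherits `P`. -/

lemma isZeroSet_setOf_le {r : X → ℝ} (hr : Continuous r) (a : ℝ) : IsZeroSet {x | r x ≤ a} :=
  ⟨fun x => projIcc 0 1 zero_le_one (r x - a), continuous_projIcc.comp (hr.sub continuous_const),
    by ext x; simp⟩

lemma isCozeroSet_setOf_lt {r : X → ℝ} (hr : Continuous r) (a : ℝ) :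
    IsCozeroSet {x | r x < a} :=
  ⟨fun x => projIcc 0 1 zero_le_one (a - r x), continuous_projIcc.comp (continuous_const.sub hr),
    by ext x; simp⟩

lemma IsCozeroSet.isOpen {C : Set X} (hC : IsCozeroSet C) : IsOpen C := by
  obtain ⟨q, hq, rfl⟩ := hC
  exact (isClosed_singleton.preimage hq).isOpen_compl

/-- A zero-set inside a cozero-set is completely separated from its complement, by `f / (f + q)`
where `Z = f⁻¹(0)` and `C = X \ q⁻¹(0)`. -/
lemma IsZeroSet.exists_separating {Z C : Set X} (hZ : IsZeroSet Z) (hC : IsCozeroSet C)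
    (hZC : Z ⊆ C) : ∃ k : X → unitInterval, Continuous k ∧ EqOn k 0 Z ∧ EqOn k 1 Cᶜ := by
  obtain ⟨f, hf, rfl⟩ := hZ
  obtain ⟨q, hq, rfl⟩ := hC
  have hpos : ∀ x, 0 < (f x : ℝ) + q x := by
    intro x
    rcases eq_or_ne (f x) 0 with hfx | hfx
    · have hqx : q x ≠ 0 := hZC hfx
      simpa [hfx] using unitInterval.pos_iff_ne_zero.2 hqx
    · exact add_pos_of_pos_of_nonneg (unitInterval.pos_iff_ne_zero.2 hfx) (q x).2.1
  refine ⟨fun x => projIcc 0 1 zero_le_one ((f x : ℝ) / (f x + q x)), ?_, ?_, ?_⟩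
  · exact continuous_projIcc.comp <| (continuous_subtype_val.comp hf).div
      ((continuous_subtype_val.comp hf).add (continuous_subtype_val.comp hq)) fun x => (hpos x).ne'
  · intro x (hx : f x = 0)
    simp [hx]
  · intro x (hx : ¬ q x ≠ 0)
    have hfx : (f x : ℝ) ≠ 0 := by simpa [not_not.1 hx] using (hpos x).ne'
    simp [not_not.1 hx, hfx]

lemma closure_image_stoneCechUnit_subset_interior {Z C : Set X} (hZ : IsZeroSet Z)
    (hC : IsCozeroSet C) (hZC : Z ⊆ C) :
    closure (stoneCechUnit '' Z : Set (StoneCech X)) ⊆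
      interior (closure (stoneCechUnit '' C)) := by
  obtain ⟨k, hk, hkZ, hkC⟩ := hZ.exists_separating hC hZC
  have hext : ∀ x, stoneCechExtend hk (stoneCechUnit x) = k x :=
    congrFun (stoneCechExtend_extends hk)
  have hW : IsOpen (stoneCechExtend hk ⁻¹' {1}ᶜ) :=
    isClosed_singleton.isOpen_compl.preimage (continuous_stoneCechExtend hk)
  have hZW : closure (stoneCechUnit '' Z) ⊆ stoneCechExtend hk ⁻¹' {0} := by
    refine closure_minimal ?_ (isClosed_singleton.preimage (continuous_stoneCechExtend hk))
    rintro _ ⟨x, hx, rfl⟩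
    simp [hext, hkZ hx]
  have hWC : stoneCechExtend hk ⁻¹' {1}ᶜ ⊆ closure (stoneCechUnit '' C) := by
    refine (denseRange_stoneCechUnit.open_subset_closure_inter hW).trans (closure_mono ?_)
    rintro _ ⟨hx1, x, rfl⟩
    refine ⟨x, by_contra fun hxC => hx1 ?_, rfl⟩
    simp [hext, hkC hxC]
  refine hZW.trans fun y (hy : _ = 0) => interior_maximal hWC hW ?_
  simp [hy]

/-- For a Urysohn function `g` of `p` and `βX \ W`, take `Z = {g ∘ η ≤ 1/2}` and
`C = {g ∘ η < 1}`. -/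
lemma exists_zeroSet_subset_cozeroSet_of_mem_isOpen {W : Set (StoneCech X)} (hW : IsOpen W)
    {p : StoneCech X} (hp : p ∈ W) :
    ∃ Z C : Set X, IsZeroSet Z ∧ IsCozeroSet C ∧ Z ⊆ C ∧ C ⊆ stoneCechUnit ⁻¹' W ∧
      p ∈ closure (stoneCechUnit '' Z) := by
  obtain ⟨g, hg, hgp, hgW⟩ := CompletelyRegularSpace.completely_regular_isOpen p W hW hp
  have hr : Continuous fun x => (g (stoneCechUnit x) : ℝ) :=
    continuous_subtype_val.comp (hg.comp continuous_stoneCechUnit)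
  refine ⟨_, _, isZeroSet_setOf_le hr (1 / 2), isCozeroSet_setOf_lt hr 1,
    fun x (hx : (g _ : ℝ) ≤ 1 / 2) => show (g _ : ℝ) < 1 from hx.trans_lt one_half_lt_one,
    fun x hx => ?_, ?_⟩
  · by_contra hxW
    simp [hgW hxW] at hx
  · have hV : IsOpen {y | (g y : ℝ) < 1 / 2} := isOpen_lt (by fun_prop) continuous_const
    refine closure_mono ?_ (denseRange_stoneCechUnit.open_subset_closure_inter hV
      (show (g p : ℝ) < 1 / 2 by simp [hgp]))
    rintro _ ⟨hy, x, rfl⟩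
    exact ⟨x, show (g _ : ℝ) ≤ 1 / 2 from le_of_lt hy, rfl⟩

namespace OnePointExt

lemma tau_image_closure (Y : OnePointExt X) (S : Set X) :
    Y.tau '' closure (stoneCechUnit '' S) = closure (stoneCechUnit '' (Y.ι '' S)) := by
  rw [tau, image_closure_of_isCompact isClosed_closure.isCompact
    (continuous_stoneCechExtend _).continuousOn, ← image_comp, stoneCechExtend_extends, image_comp]

lemma pt_mem_closure_image_iff (Y : OnePointExt X) (S : Set X) :
    Y.pt ∈ closure (Y.ι '' S) ↔ ∃ p ∈ closure (stoneCechUnit '' S), p ∈ Y.theta := by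
  rw [isInducing_stoneCechUnit.closure_eq_preimage_closure_image, mem_preimage,
    ← tau_image_closure]
  rfl

end OnePointExt

section Pseudocompact

variable {B : Type u} [TopologicalSpace B]

lemma Pseudocompact.of_homeomorph {A : Type u} [TopologicalSpace A] (e : A ≃ₜ B)
    (hA : Pseudocompact A) : Pseudocompact B := by
  intro f hf
  obtain ⟨M, hM⟩ := hA (f ∘ e) (hf.comp e.continuous)
  exact ⟨M, fun z => by simpa using hM (e.symm z)⟩

/-- Bumps of height `n` supported in the `n`-th set add up to a continuous unbounded function. -/
lemma not_pseudocompact_of_locallyFinite [CompletelyRegularSpace B] {O : ℕ → Set B}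
    (hO : ∀ n, IsOpen (O n)) (hne : ∀ n, (O n).Nonempty) (hlf : LocallyFinite O) :
    ¬ Pseudocompact B := by
  choose x hx using hne
  have bump : ∀ n, ∃ g : B → ℝ,
      Continuous g ∧ g (x n) = n ∧ (∀ b, 0 ≤ g b) ∧ Function.support g ⊆ O n := by
    intro n
    obtain ⟨g, hg, hgx, hgO⟩ := CompletelyRegularSpace.completely_regular_isOpen _ _ (hO n) (hx n)
    refine ⟨fun b => n * (1 - g b), by fun_prop, by simp [hgx],
      fun b => mul_nonneg n.cast_nonneg (sub_nonneg.2 (g b).2.2), fun b hb => ?_⟩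
    by_contra hbO
    simp [hgO hbO] at hb
  choose g hg hgx hg0 hgO using bump
  intro hB
  obtain ⟨M, hM⟩ := hB _ (continuous_finsum hg (hlf.subset hgO))
  obtain ⟨n, hn⟩ := exists_nat_gt M
  have hfin : Function.HasFiniteSupport fun i => g i (x n) :=
    (hlf.point_finite (x n)).subset fun i hi => hgO i hi
  have hle : (n : ℝ) ≤ ∑ᶠ i, g i (x n) := hgx n ▸ single_le_finsum n hfin fun i => hg0 i _
  linarith [(le_abs_self _).trans (hM (x n))]

/-- If `f` is unbounded on `closure U`, the sets `{b ∈ U | n < |f b|}` form a locally finite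
sequence of nonempty open sets. -/
lemma Pseudocompact.closure_of_isOpen [CompletelyRegularSpace B] (hB : Pseudocompact B)
    {U : Set B} (hU : IsOpen U) : Pseudocompact (closure U) := by
  intro f hf
  by_contra! hunb
  classical
  set φ : B → ℝ := fun b => if h : b ∈ closure U then |f ⟨b, h⟩| else 0
  have hφ : ContinuousOn φ (closure U) := by
    rw [continuousOn_iff_continuous_domRestrict]
    convert continuous_abs.comp hf using 1
    funext z
    simp [φ, z.2]
  refine not_pseudocompact_of_locallyFinite (O := fun n : ℕ => U ∩ φ ⁻¹' Ioi n)
    (fun n => (hφ.mono subset_closure).isOpen_inter_preimage hU isOpen_Ioi) (fun n => ?_)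
    (fun b => ?_) hB
  · obtain ⟨z, hz⟩ := hunb n
    have hφz : ∀ᶠ b in 𝓝[U] z, (n : ℝ) < φ b :=
      ((hφ z z.2).mono subset_closure).eventually (lt_mem_nhds (by simpa [φ] using hz))
    have hne : (𝓝[U] (z : B)).NeBot := mem_closure_iff_nhdsWithin_neBot.1 z.2
    exact (hφz.and self_mem_nhdsWithin).exists.imp fun b hb => ⟨hb.2, hb.1⟩
  · obtain ⟨N, hN⟩ : ∃ N : ℕ, ∀ᶠ b' in 𝓝[closure U] b, φ b' < N := by
      by_cases hb : b ∈ closure U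
      · obtain ⟨N, hN⟩ := exists_nat_gt (φ b)
        exact ⟨N, (hφ b hb).eventually (gt_mem_nhds hN)⟩
      · have hbot : 𝓝[closure U] b = ⊥ :=
          notMem_closure_iff_nhdsWithin_eq_bot.1 (by rwa [closure_closure])
        exact ⟨0, by simp [hbot]⟩
    obtain ⟨V, hV, hVN⟩ := mem_nhdsWithin_iff_exists_mem_nhds_inter.1 hN
    refine ⟨V, hV, (finite_Iio N).subset fun i ⟨c, ⟨hcU, hci⟩, hcV⟩ => ?_⟩
    have hcN : φ c < N := hVN ⟨hcV, subset_closure hcU⟩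
    exact_mod_cast (show (i : ℝ) < N from (hci : (i : ℝ) < φ c).trans hcN)

end Pseudocompact

lemma property_closure_of_isOpen_of_closure_subset {P : (Z : Type u) → [TopologicalSpace Z] → Prop}
    (hProp : TopProperty P) (hP : IsPseudocompactness P ∨ ClosedHereditary P)
    [CompletelyRegularSpace X] {A T : Set X} (hA : IsOpen A) (hAT : closure A ⊆ T)
    (hT : P T) : P (closure A) := by
  let e : (Subtype.val ⁻¹' closure A : Set T) ≃ₜ closure A :=
    IsEmbedding.subtypeVal.homeomorphOfSubsetRange (by simpa using hAT)
  rcases hP with hps | hch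
  · have hcl : closure (Subtype.val ⁻¹' A : Set T) = Subtype.val ⁻¹' closure A := by
      rw [IsInducing.subtypeVal.closure_eq_preimage_closure_image, image_preimage_eq_inter_range,
        Subtype.range_coe, inter_eq_left.2 (subset_closure.trans hAT)]
    have := ((hps T).1 hT).closure_of_isOpen (hA.preimage continuous_subtype_val)
    exact (hps _).2 <| (hcl ▸ this).of_homeomorph e
  · exact hProp _ _ e (hch T hT _ (isClosed_closure.preimage continuous_subtype_val))

/-- Let `X` be a Tychonoff space and let `P` be either pseudocompactness,
or a closed hereditary topological property preserved under finite closed sums of subspaces.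
For a one-point Tychonoff extension `Y` of `X`: `Y` is a `P`-far extension of `X` iff
`Θ_X(Y) ⊆ βX \ λ_P X`. -/
theorem stmt10 {X : Type u} [TopologicalSpace X] [T35Space X]
    (P : (Z : Type u) → [TopologicalSpace Z] → Prop) (hProp : TopProperty P)
    (hP : IsPseudocompactness P ∨ (ClosedHereditary P ∧ FiniteClosedSums P))
    (Y : OnePointExt X) :
    Y.PFar P ↔ Y.theta ⊆ (lambdaP P X)ᶜ := by
  refine ⟨fun hfar p hpθ hpLambda => ?_, fun hθ Z C hZ hC hPC hZC hpt => ?_⟩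
  · obtain ⟨C, ⟨hC, hPC⟩, hpC⟩ := mem_iUnion₂.1 hpLambda
    obtain ⟨Z, C', hZ, hC', hZC', hC'C, hpZ⟩ :=
      exists_zeroSet_subset_cozeroSet_of_mem_isOpen isOpen_interior hpC
    have hcl : closure C' ⊆ closure C := by
      refine closure_minimal (fun x hx => ?_) isClosed_closure
      rw [isInducing_stoneCechUnit.closure_eq_preimage_closure_image, mem_preimage]
      exact interior_subset (hC'C hx)
    refine hfar Z C' hZ hC' ?_ hZC' ((Y.pt_mem_closure_image_iff Z).2 ⟨p, hpZ, hpθ⟩)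
    exact property_closure_of_isOpen_of_closure_subset hProp (hP.imp_right And.left) hC'.isOpen hcl hPC
  · obtain ⟨p, hpZ, hpθ⟩ := (Y.pt_mem_closure_image_iff Z).1 hpt
    exact hθ hpθ <| mem_iUnion₂.2
      ⟨C, ⟨hC, hPC⟩, closure_image_stoneCechUnit_subset_interior hZ hC hZC hpZ⟩
end

section
/- Let X be a locally compact Tychonoff space and let Z be a zero-set of βX with Z ∩ X = ∅. Then Z is regular-closed in X* = βX\X; that is, Z = cl_{X*}(int_{X*} Z). -/
open Set Topology Filter

universe u

variable {X : Type u} [TopologicalSpace X]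

/-!
Write `Z = {F = 0}` with `F > 0` on `X`, and fix `p ∈ Z` and a neighbourhood `U` of `p`. By
density and local compactness there are points `xₙ ∈ X` near `p` with `F xₙ < 1/(n+1)` and
compactly supported bumps `φₙ` at `xₙ` whose supports stay in that region. As `F` is bounded
away from `0` near every point of `X`, the supports are locally finite, so `∑ φₙ` truncated to
`[0,1]` is continuous and extends to `Φ` on `βX`. A cluster point `q` of `(xₙ)` lies in
`U ∩ X*` with `F q = 0` and `Φ q = 1`. A remainder point of `{Φ ≠ 0}` lies in the closure of
`⋃ supp φₙ`, and off the finitely many compact supports with `1/(n+1) ≥ c` this union lies in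
`{F < c}`; so `F` vanishes on `{Φ ≠ 0} ∩ X*`, a neighbourhood of `q` in `X*`.
-/

theorem MapClusterPt.eq_of_tendsto {α Y : Type*} [TopologicalSpace Y] [T2Space Y]
    {u : α → Y} {l : Filter α} {x y : Y} (hx : MapClusterPt x l u) (hy : Tendsto u l (𝓝 y)) :
    x = y := by
  by_contra hne
  exact (ClusterPt.mono hx hy).neBot.ne (disjoint_nhds_nhds.2 hne).eq_bot

theorem Filter.Tendsto.finite_setOf_le {ε : ℕ → ℝ} (hε : Tendsto ε atTop (𝓝 0)) {c : ℝ}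
    (hc : 0 < c) : {n | c ≤ ε n}.Finite := by
  have hsmall : ∀ᶠ n in cofinite, ε n < c := by
    rw [Nat.cofinite_eq_atTop]
    exact hε.eventually (gt_mem_nhds hc)
  simpa using hsmall

section Vanishing

variable {X : Type*} [TopologicalSpace X] {s : ℕ → Set X} {h : X → ℝ} {ε : ℕ → ℝ}

theorem locallyFinite_of_subset_lt (hh : Continuous h) (hpos : ∀ x, 0 < h x)
    (hε : Tendsto ε atTop (𝓝 0)) (hs : ∀ n, s n ⊆ {x | h x < ε n}) : LocallyFinite s := by
  intro y
  refine ⟨{x | h y / 2 < h x}, (isOpen_lt continuous_const hh).mem_nhds (half_lt_self (hpos y)),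
    (hε.finite_setOf_le (half_pos (hpos y))).subset ?_⟩
  rintro n ⟨x, hxs, hxy⟩
  exact ((show h y / 2 < h x from hxy).trans (hs n hxs)).le

theorem exists_isCompact_superset_iUnion_inter (hcpt : ∀ n, IsCompact (closure (s n)))
    (hε : Tendsto ε atTop (𝓝 0)) (hs : ∀ n, s n ⊆ {x | h x < ε n}) {c : ℝ} (hc : 0 < c) :
    ∃ K, IsCompact K ∧ (⋃ n, s n) ∩ {x | c ≤ h x} ⊆ K := by
  refine ⟨⋃ n ∈ {n | c ≤ ε n}, closure (s n),
    (hε.finite_setOf_le hc).isCompact_biUnion fun n _ ↦ hcpt n, ?_⟩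
  rintro x ⟨hx, hcx⟩
  obtain ⟨n, hxn⟩ := mem_iUnion.1 hx
  exact mem_biUnion (hcx.trans (hs n hxn).le : c ≤ ε n) (subset_closure hxn)

end Vanishing

theorem mem_range_or_nonpos_of_mem_closure_image {X Y : Type*} [TopologicalSpace X]
    [TopologicalSpace Y] [T2Space Y] {e : X → Y} (he : Continuous e) {F : Y → ℝ}
    (hF : Continuous F) {A : Set X}
    (hA : ∀ c > 0, ∃ K, IsCompact K ∧ A ∩ {x | c ≤ F (e x)} ⊆ K) {r : Y}
    (hr : r ∈ closure (e '' A)) : r ∈ range e ∨ F r ≤ 0 := by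
  by_contra! hrX
  obtain ⟨K, hK, hAK⟩ := hA (F r / 2) (half_pos hrX.2)
  have hsplit : e '' A ⊆ {y | F y ≤ F r / 2} ∪ e '' K := by
    rintro _ ⟨x, hx, rfl⟩
    by_cases hc : F r / 2 ≤ F (e x)
    · exact Or.inr (mem_image_of_mem e (hAK ⟨hx, hc⟩))
    · exact Or.inl (le_of_not_ge hc)
  have hclosed : IsClosed ({y | F y ≤ F r / 2} ∪ e '' K) :=
    (isClosed_le hF continuous_const).union (hK.image he).isClosed
  rcases closure_minimal hsplit hclosed hr with hle | ⟨x, -, rfl⟩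
  · linarith [show F r ≤ F r / 2 from hle, hrX.2]
  · exact hrX.1 (mem_range_self x)

theorem exists_bump_support_subset_preimage {X Y : Type*} [TopologicalSpace X] [RegularSpace X]
    [LocallyCompactSpace X] [TopologicalSpace Y] {e : X → Y} (he : Continuous e)
    (hd : DenseRange e) {O : Set Y} (hO : IsOpen O) (hne : O.Nonempty) :
    ∃ (x : X) (φ : C(X, ℝ)), φ x = 1 ∧ (∀ y, 0 ≤ φ y) ∧ HasCompactSupport φ ∧
      Function.support φ ⊆ e ⁻¹' O := by
  obtain ⟨x, hx⟩ := hd.exists_mem_open hO hne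
  obtain ⟨φ, hφx, hφ0, hφc, hφ01⟩ := exists_continuous_one_zero_of_isCompact isCompact_singleton
    (hO.preimage he).isClosed_compl
    (disjoint_compl_right_iff_subset.2 (singleton_subset_iff.2 hx))
  exact ⟨x, φ, hφx rfl, fun y ↦ (hφ01 y).1, hφc,
    Function.support_subset_iff'.2 fun y hy ↦ hφ0 hy⟩

theorem exists_continuous_unitInterval_of_locallyFinite {X ι : Type*} [TopologicalSpace X]
    {φ : ι → X → ℝ} (hφ : ∀ i, Continuous (φ i)) (hφ0 : ∀ i x, 0 ≤ φ i x)
    (hlf : LocallyFinite fun i ↦ Function.support (φ i)) :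
    ∃ g : X → unitInterval, Continuous g ∧ (∀ i x, 1 ≤ φ i x → g x = 1) ∧
      ∀ x, g x ≠ 0 → ∃ i, φ i x ≠ 0 := by
  refine ⟨fun x ↦ projIcc 0 1 zero_le_one (∑ᶠ i, φ i x),
    continuous_projIcc.comp (continuous_finsum hφ hlf), fun i x hi ↦ ?_, fun x hx ↦ ?_⟩
  · exact projIcc_of_right_le _
      (hi.trans (single_le_finsum i (hlf.point_finite x) fun j ↦ hφ0 j x))
  · by_contra! hzero
    exact hx (projIcc_of_le_left _ (finsum_eq_zero_of_forall_eq_zero hzero).le)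

theorem mem_closure_image_of_stoneCechExtend_ne_zero {X : Type*} [TopologicalSpace X]
    {g : X → unitInterval} (hg : Continuous g) {r : StoneCech X} (hr : stoneCechExtend hg r ≠ 0) :
    r ∈ closure (stoneCechUnit '' {x | g x ≠ 0}) := by
  refine closure_mono ?_ (denseRange_stoneCechUnit.open_subset_closure_inter
    (isOpen_ne_fun (continuous_stoneCechExtend hg) continuous_const) hr)
  rintro _ ⟨hx, x, rfl⟩
  exact mem_image_of_mem _ (by simpa using hx)

theorem exists_isOpen_subset_remainder_nonpos {X : Type*} [TopologicalSpace X] [RegularSpace X]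
    [LocallyCompactSpace X] {F : StoneCech X → ℝ} (hF : Continuous F)
    (hpos : ∀ x, 0 < F (stoneCechUnit x)) {p : StoneCech X} (hp : F p ≤ 0)
    {U : Set (StoneCech X)} (hU : IsOpen U) (hpU : p ∈ U) :
    ∃ N : Set (StoneCech X), IsOpen N ∧ N ⊆ U ∧ (N \ range stoneCechUnit).Nonempty ∧
      ∀ r ∈ N \ range stoneCechUnit, F r ≤ 0 := by
  set e : X → StoneCech X := stoneCechUnit
  obtain ⟨V, hVo, hpV, hVU, -⟩ :=
    exists_open_between_and_isCompact_closure isCompact_singleton hU (singleton_subset_iff.2 hpU)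
  set ε : ℕ → ℝ := fun n ↦ 1 / (n + 1)
  have hε : Tendsto ε atTop (𝓝 0) := tendsto_one_div_add_atTop_nhds_zero_nat
  have hbump : ∀ n, ∃ (x : X) (φ : C(X, ℝ)), φ x = 1 ∧ (∀ y, 0 ≤ φ y) ∧
      HasCompactSupport φ ∧ Function.support φ ⊆ e ⁻¹' (V ∩ {r | F r < ε n}) := fun n ↦
    exists_bump_support_subset_preimage continuous_stoneCechUnit denseRange_stoneCechUnit
      (hVo.inter (isOpen_lt hF continuous_const))
      ⟨p, singleton_subset_iff.1 hpV, hp.trans_lt (by positivity)⟩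
  choose x φ hφx hφ0 hφc hφs using hbump
  have hxφ : ∀ n, x n ∈ Function.support (φ n) := fun n ↦ by simp [hφx]
  have hφF : ∀ n, Function.support (φ n) ⊆ {y | F (e y) < ε n} := fun n _ hy ↦ (hφs n hy).2
  obtain ⟨g, hg, hg1, hg0⟩ := exists_continuous_unitInterval_of_locallyFinite
    (fun n ↦ (φ n).continuous) hφ0
    (locallyFinite_of_subset_lt (hF.comp continuous_stoneCechUnit) hpos hε hφF)
  set Φ := stoneCechExtend hg
  have hΦ : Continuous Φ := continuous_stoneCechExtend hg
  obtain ⟨q, hq⟩ := exists_clusterPt_of_compactSpace (map (e ∘ x) atTop)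
  have hqU : q ∈ U :=
    hVU (hq.mem_closure_of_mem _ (mem_map.2 (univ_mem' fun n ↦ (hφs n (hxφ n)).1)))
  have hFq : F q ≤ 0 := by
    have hlim : Tendsto (F ∘ e ∘ x) atTop (𝓝 0) :=
      squeeze_zero (fun n ↦ (hpos (x n)).le) (fun n ↦ (hφF n (hxφ n)).le) hε
    exact ((MapClusterPt.continuousAt_comp hF.continuousAt hq).eq_of_tendsto hlim).le
  have hΦq : Φ q = 1 := by
    refine (MapClusterPt.continuousAt_comp hΦ.continuousAt hq).eq_of_tendsto
      (tendsto_const_nhds.congr fun n ↦ ?_)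
    simp [Φ, e, hg1 n (x n) (hφx n).ge]
  have hqX : q ∉ range e := by
    rintro ⟨y, rfl⟩
    exact (hpos y).not_ge hFq
  have hΦo : IsOpen {r | Φ r ≠ 0} := isOpen_ne_fun hΦ continuous_const
  refine ⟨U ∩ {r | Φ r ≠ 0}, hU.inter hΦo, inter_subset_left,
    ⟨q, ⟨hqU, by simp [hΦq]⟩, hqX⟩, ?_⟩
  rintro r ⟨⟨-, hr⟩, hrX⟩
  have hrcl : r ∈ closure (e '' ⋃ n, Function.support (φ n)) := by
    refine closure_mono (image_mono fun y hy ↦ ?_)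
      (mem_closure_image_of_stoneCechExtend_ne_zero hg hr)
    obtain ⟨n, hn⟩ := hg0 y hy
    exact mem_iUnion.2 ⟨n, hn⟩
  exact (mem_range_or_nonpos_of_mem_closure_image continuous_stoneCechUnit hF
    (fun c hc ↦ exists_isCompact_superset_iUnion_inter hφc hε hφF hc) hrcl).resolve_left hrX

/-- Let `X` be a locally compact Tychonoff space and let `Z` be a zero-set
of `βX` with `Z ∩ X = ∅`.  Then `Z` is regular-closed in `X* = βX \ X`:
`Z = cl_{X*}(int_{X*} Z)`. -/
theorem stmt11 {X : Type u} [TopologicalSpace X] [T35Space X] [LocallyCompactSpace X]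
    (Z : Set (StoneCech X)) (hZ : IsZeroSet Z)
    (hdisj : Z ∩ Set.range (stoneCechUnit : X → StoneCech X) = ∅) :
    (Subtype.val ⁻¹' Z : Set ↥((Set.range (stoneCechUnit : X → StoneCech X))ᶜ)) =
      closure (interior
        (Subtype.val ⁻¹' Z : Set ↥((Set.range (stoneCechUnit : X → StoneCech X))ᶜ))) := by
  obtain ⟨f, hf, rfl⟩ := hZ
  have hF : Continuous fun r ↦ (f r : ℝ) := continuous_subtype_val.comp hf
  have hF0 : ∀ r, (f r : ℝ) ≤ 0 ↔ f r = 0 := fun r ↦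
    ⟨fun h ↦ Subtype.ext (le_antisymm h (f r).2.1), fun h ↦ by simp [h]⟩
  have hpos : ∀ x, 0 < (f (stoneCechUnit x) : ℝ) := fun x ↦
    unitInterval.pos_iff_ne_zero.2 fun h ↦ hdisj.subset ⟨h, x, rfl⟩
  refine Subset.antisymm (fun w hw ↦ mem_closure_iff.2 fun o ho hwo ↦ ?_)
    (closure_minimal interior_subset ((isClosed_singleton.preimage hf).preimage
      continuous_subtype_val))
  obtain ⟨U, hU, rfl⟩ := isOpen_induced_iff.1 ho
  obtain ⟨N, hNo, hNU, ⟨q, hqN, hqX⟩, hN⟩ :=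
    exists_isOpen_subset_remainder_nonpos hF hpos ((hF0 w).2 hw) hU hwo
  refine ⟨⟨q, hqX⟩, hNU hqN, interior_maximal (fun r hr ↦ ?_)
    (hNo.preimage continuous_subtype_val) hqN⟩
  exact (hF0 r).1 (hN r ⟨hr, r.2⟩)
end

section
/- Let X be a Tychonoff space and let P be a closed hereditary topological property. Then λ_P X = ⋃{ int_{βX} cl_{βX} Z : Z a zero-set of X having P }. -/
open Set Topology Filter

universe u

variable {X : Type u} [TopologicalSpace X]

/-!
Each point `t ∈ int_{βX} cl_{βX} S` of one union must be found in the other. A Urysohn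
function `f : βX → [0,1]` with `f t = 0` and `f = 1` off `int_{βX} cl_{βX} S` gives the
cozero-set `C = {f < 1/2}` and the zero-set `Z = {f ≤ 1/2}` of `X`, with
`cl_X C ⊆ Z ⊆ X ∩ cl_{βX} S = cl_X S` and `t ∈ int_{βX} cl_{βX} C`. Closed subsets of a space
with `P` have `P`, which moves `P` between `cl_X S`, `Z` and `cl_X C`.
-/

variable {Y : Type u} [TopologicalSpace Y]

theorem ClosedHereditary.of_isClosed_subset {P : (Z : Type u) → [TopologicalSpace Z] → Prop}
    (hProp : TopProperty P) (hHer : ClosedHereditary P) {A B : Set Y}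
    (hB : P B) (hAB : A ⊆ B) (hA : IsClosed A) : P A :=
  hProp _ _ (IsEmbedding.subtypeVal.homeomorphOfSubsetRange (by simpa using hAB))
    (hHer _ hB _ (hA.preimage continuous_subtype_val))

theorem IsZeroSet.isClosed {A : Set Y} (hA : IsZeroSet A) : IsClosed A := by
  obtain ⟨f, hf, rfl⟩ := hA
  exact isClosed_singleton.preimage hf

theorem isZeroSet_setOf_le_s12 {g : Y → ℝ} (hg : Continuous g) (c : ℝ) :
    IsZeroSet {y | g y ≤ c} := by
  refine ⟨fun y => projIcc 0 1 zero_le_one (g y - c),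
    continuous_projIcc.comp (hg.sub continuous_const), ?_⟩
  ext y
  simp [projIcc_eq_zero]

theorem isCozeroSet_setOf_lt_s12 {g : Y → ℝ} (hg : Continuous g) (c : ℝ) :
    IsCozeroSet {y | g y < c} := by
  refine ⟨fun y => projIcc 0 1 zero_le_one (c - g y),
    continuous_projIcc.comp (continuous_const.sub hg), ?_⟩
  ext y
  simp [projIcc_eq_zero]

theorem exists_cozeroSet_subset_zeroSet_of_mem_interior_closure [CompletelyRegularSpace Y]
    {S : Set Y} {t : StoneCech Y}
    (ht : t ∈ interior (closure (stoneCechUnit '' S))) :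
    ∃ C Z : Set Y, IsCozeroSet C ∧ IsZeroSet Z ∧ C ⊆ Z ∧ Z ⊆ closure S ∧
      t ∈ interior (closure (stoneCechUnit '' C)) := by
  obtain ⟨f, hf, hft, hf_one⟩ :=
    completelyRegularSpace_iff_isOpen.mp inferInstance t _ isOpen_interior ht
  have hg : Continuous fun y : Y => (f (stoneCechUnit y) : ℝ) :=
    continuous_subtype_val.comp (hf.comp continuous_stoneCechUnit)
  set W : Set (StoneCech Y) := {s | (f s : ℝ) < 1 / 2}
  have hW : IsOpen W := isOpen_lt (continuous_subtype_val.comp hf) continuous_const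
  refine ⟨stoneCechUnit ⁻¹' W, {y | (f (stoneCechUnit y) : ℝ) ≤ 1 / 2},
    isCozeroSet_setOf_lt_s12 hg _, isZeroSet_setOf_le_s12 hg _, fun _ => le_of_lt (α := ℝ), ?_, ?_⟩
  · intro y hy
    have hy_int : stoneCechUnit y ∈ interior (closure (stoneCechUnit '' S)) := by
      by_contra hy_not
      norm_num [hf_one hy_not] at hy
    rw [isInducing_stoneCechUnit.closure_eq_preimage_closure_image S]
    exact mem_preimage.mpr (interior_subset hy_int)
  · have hW_sub : W ⊆ closure (stoneCechUnit '' (stoneCechUnit ⁻¹' W)) := by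
      rw [image_preimage_eq_inter_range]
      exact denseRange_stoneCechUnit.open_subset_closure_inter hW
    exact interior_maximal hW_sub hW (by simp [W, hft])

/-- Let `X` be a Tychonoff space and `P` a closed hereditary topological
property.  Then `λ_P X = ⋃ { int_{βX} cl_{βX} Z : Z a zero-set of X having P }`. -/
theorem stmt12 {X : Type u} [TopologicalSpace X] [T35Space X]
    (P : (Z : Type u) → [TopologicalSpace Z] → Prop)
    (hProp : TopProperty P) (hHer : ClosedHereditary P) :
    lambdaP P X = ⋃ Z ∈ {Z : Set X | IsZeroSet Z ∧ P Z},
      interior (closure (stoneCechUnit '' Z)) := by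
  simp only [lambdaP, Set.ext_iff, mem_iUnion, mem_ofPred_eq, exists_prop]
  intro t
  constructor
  · rintro ⟨S, ⟨-, hPS⟩, ht⟩
    obtain ⟨C, Z, -, hZ, hCZ, hZS, htC⟩ :=
      exists_cozeroSet_subset_zeroSet_of_mem_interior_closure ht
    exact ⟨Z, ⟨hZ, hHer.of_isClosed_subset hProp hPS hZS hZ.isClosed⟩,
      interior_mono (closure_mono (image_mono hCZ)) htC⟩
  · rintro ⟨S, ⟨hS, hPS⟩, ht⟩
    obtain ⟨C, Z, hC, hZ, hCZ, hZS, htC⟩ :=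
      exists_cozeroSet_subset_zeroSet_of_mem_interior_closure ht
    have hCS : closure C ⊆ S :=
      (closure_minimal hCZ hZ.isClosed).trans (hZS.trans hS.isClosed.closure_subset)
    exact ⟨C, ⟨hC, hHer.of_isClosed_subset hProp hPS hCS isClosed_closure⟩, htC⟩
end

section
/- Let X be a locally compact, locally-P Tychonoff space, where P is a closed hereditary topological property, and suppose that either (1) X is paracompact and P is preserved under locally finite closed sums of subspaces, or (2) P is preserved under countable closed sums of subspaces. If Z is a zero-set of βX with X ∩ Z = ∅, then int_{X*} Z ⊆ λ_P X, where X* = βX\X. -/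
open Set Topology Filter

universe u

variable {X : Type u} [TopologicalSpace X]

section Helpers

variable {X : Type u} [TopologicalSpace X]

/-- For a Tychonoff space, every open neighborhood in `X` comes from an open set in `βX`. -/
lemma key_nhd [T35Space X] {U : Set X} (hU : IsOpen U) {x : X} (hx : x ∈ U) :
    ∃ V : Set (StoneCech X), IsOpen V ∧ stoneCechUnit x ∈ V ∧
      stoneCechUnit ⁻¹' V ⊆ U := by
  obtain ⟨f, cf, fx, fK⟩ := CompletelyRegularSpace.completely_regular x Uᶜ
    hU.isClosed_compl (by simpa using hx)
  refine ⟨stoneCechExtend cf ⁻¹' {t : unitInterval | (t : ℝ) < 1},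
    (isOpen_lt continuous_subtype_val continuous_const).preimage (continuous_stoneCechExtend cf),
    ?_, ?_⟩
  · have h1 : stoneCechExtend cf (stoneCechUnit x) = f x := congrFun (stoneCechExtend_extends cf) x
    simp only [mem_preimage, mem_setOf_eq]
    rw [h1, fx]
    norm_num
  · intro y hy
    by_contra hyU
    have h2 : f y = 1 := fK hyU
    have h1 : stoneCechExtend cf (stoneCechUnit y) = f y := congrFun (stoneCechExtend_extends cf) y
    simp only [mem_preimage, mem_setOf_eq, h1, h2] at hy
    norm_num at hy

lemma isInducing_scu [T35Space X] : Topology.IsInducing (stoneCechUnit : X → StoneCech X) := by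
  rw [Topology.isInducing_iff_nhds]
  intro x
  refine le_antisymm (tendsto_iff_comap.1 continuous_stoneCechUnit.continuousAt) ?_
  intro s hs
  obtain ⟨U, hUs, hUopen, hxU⟩ := mem_nhds_iff.1 hs
  obtain ⟨V, hVopen, hxV, hVU⟩ := key_nhd hUopen hxU
  exact mem_comap.2 ⟨V, hVopen.mem_nhds hxV, hVU.trans hUs⟩

lemma isOpen_range_scu [T35Space X] [LocallyCompactSpace X] :
    IsOpen (Set.range (stoneCechUnit : X → StoneCech X)) := by
  rw [isOpen_iff_forall_mem_open]
  rintro _ ⟨x, rfl⟩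
  obtain ⟨K, hKmem, _, hKcomp⟩ := local_compact_nhds (x := x) (n := univ) univ_mem
  obtain ⟨V, hVopen, hxV, hVK⟩ := key_nhd isOpen_interior (mem_interior_iff_mem_nhds.2 hKmem)
  refine ⟨V, ?_, hVopen, hxV⟩
  have h1 : V ⊆ closure (V ∩ range (stoneCechUnit : X → StoneCech X)) := by
    intro y hy
    exact hVopen.inter_closure ⟨hy, by simp [denseRange_stoneCechUnit.closure_range]⟩
  have h2 : V ∩ range (stoneCechUnit : X → StoneCech X) ⊆ stoneCechUnit '' K := by
    rintro _ ⟨hyV, x', rfl⟩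
    exact ⟨x', interior_subset (hVK hyV), rfl⟩
  have h3 : closure (stoneCechUnit '' K) = stoneCechUnit '' K :=
    (hKcomp.image continuous_stoneCechUnit).isClosed.closure_eq
  intro y hy
  have := (closure_mono h2) (h1 hy)
  rw [h3] at this
  exact image_subset_range _ _ this

/-- Subtype of subtype homeomorphism. -/
def homeoInter {α : Type u} [TopologicalSpace α] (S T : Set α) :
    ↥((Subtype.val : ↥S → α) ⁻¹' T) ≃ₜ ↥(S ∩ T) where
  toFun y := ⟨y.1.1, y.1.2, y.2⟩
  invFun a := ⟨⟨a.1, a.2.1⟩, a.2.2⟩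
  left_inv _ := rfl
  right_inv _ := rfl
  continuous_toFun :=
    Continuous.subtype_mk (continuous_subtype_val.comp continuous_subtype_val) _
  continuous_invFun :=
    Continuous.subtype_mk (Continuous.subtype_mk continuous_subtype_val _) _

lemma continuous_of_isEmpty {A B : Type*} [TopologicalSpace A] [TopologicalSpace B] [IsEmpty A]
    (f : A → B) : Continuous f :=
  ⟨fun s _ => by rw [Set.eq_empty_of_isEmpty (f ⁻¹' s)]; exact isOpen_empty⟩

def homeoOfIsEmpty {A B : Type*} [TopologicalSpace A] [TopologicalSpace B] [IsEmpty A]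
    [IsEmpty B] : A ≃ₜ B :=
  ⟨Equiv.equivOfIsEmpty A B, continuous_of_isEmpty _, continuous_of_isEmpty _⟩

end Helpers

section Sums

variable {P : (Z : Type u) → [TopologicalSpace Z] → Prop}

lemma pEmpty (hProp : TopProperty P) (hHer : ClosedHereditary P)
    {X : Type u} [TopologicalSpace X] (hloc : LocallyP P X) (hne : Nonempty X)
    (E : Type u) [TopologicalSpace E] [IsEmpty E] : P E := by
  obtain ⟨x⟩ := hne
  obtain ⟨U, _, _, hPU⟩ := hloc x
  have h1 := hHer _ hPU (∅ : Set ↥(closure U)) isClosed_empty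
  exact hProp _ _ homeoOfIsEmpty h1

lemma finSum (hsum : (LocallyFiniteClosedSums P) ∨ CountableClosedSums P)
    (T : Type u) [TopologicalSpace T] [T2Space T] (n : ℕ) (hn : 0 < n)
    (F : Fin n → Set T) (hcl : ∀ i, IsClosed (F i)) (hP : ∀ i, P ↥(F i))
    (hcov : ⋃ i, F i = univ) : P T := by
  rcases hsum with h | h
  · refine h T (ULift (Fin n)) (fun i => F i.down) (locallyFinite_of_finite _)
      (fun i => hcl _) (fun i => hP _) ?_
    rw [← hcov]
    exact le_antisymm (iUnion_subset fun i => subset_iUnion F i.down)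
      (iUnion_subset fun j => subset_iUnion (fun i : ULift.{u} (Fin n) => F i.down) ⟨j⟩)
  · refine h T (fun i => F ⟨i % n, Nat.mod_lt _ hn⟩) (fun i => hcl _) (fun i => hP _) ?_
    rw [← hcov]
    refine le_antisymm (iUnion_subset fun i => subset_iUnion F _) (iUnion_subset fun j => ?_)
    have : (⟨j.1 % n, Nat.mod_lt _ hn⟩ : Fin n) = j := Fin.ext (Nat.mod_eq_of_lt j.2)
    calc F j = F ⟨(j : ℕ) % n, Nat.mod_lt _ hn⟩ := by rw [this]
    _ ⊆ ⋃ i : ℕ, F ⟨i % n, Nat.mod_lt _ hn⟩ := subset_iUnion (fun i : ℕ => F ⟨i % n, Nat.mod_lt _ hn⟩) (j : ℕ)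

lemma compactP (hProp : TopProperty P) (hHer : ClosedHereditary P)
    (hsum : (LocallyFiniteClosedSums P) ∨ CountableClosedSums P)
    {X : Type u} [TopologicalSpace X] [T35Space X]
    (hloc : LocallyP P X) (hXne : Nonempty X) (S : Set X) (hS : IsCompact S) : P ↥S := by
  rcases isEmpty_or_nonempty ↥S with hE | hne
  · exact pEmpty hProp hHer hloc hXne _
  choose U hUopen hUmem hUP using hloc
  obtain ⟨t, htS, hcov⟩ := hS.elim_nhds_subcover U (fun x _ => (hUopen x).mem_nhds (hUmem x))
  have htne : t.Nonempty := by
    rcases hne with ⟨⟨x, hx⟩⟩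
    rcases mem_iUnion₂.1 (hcov hx) with ⟨y, hy, _⟩
    exact ⟨y, hy⟩
  have hn : 0 < t.card := Finset.card_pos.2 htne
  have hSclosed : IsClosed S := hS.isClosed
  refine finSum hsum ↥S t.card hn
    (fun i => (Subtype.val : ↥S → X) ⁻¹' closure (U ((t.equivFin.symm i) : X)))
    (fun i => isClosed_closure.preimage continuous_subtype_val) (fun i => ?_) ?_
  · set y : X := ((t.equivFin.symm i) : X) with hy
    have h2 : P ↥((Subtype.val : ↥(closure (U y)) → X) ⁻¹' S) :=
      hHer _ (hUP y) _ (hSclosed.preimage continuous_subtype_val)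
    have h3 : P ↥(closure (U y) ∩ S) := hProp _ _ (homeoInter _ _) h2
    have h4 : P ↥(S ∩ closure (U y)) := hProp _ _ (Homeomorph.setCongr (inter_comm _ _)) h3
    exact hProp _ _ (homeoInter S (closure (U y))).symm h4
  · ext ⟨x, hx⟩
    simp only [mem_iUnion, mem_univ, iff_true, mem_preimage]
    rcases mem_iUnion₂.1 (hcov hx) with ⟨y, hyt, hxy⟩
    refine ⟨t.equivFin ⟨y, hyt⟩, ?_⟩
    have : ((t.equivFin.symm (t.equivFin ⟨y, hyt⟩)) : X) = y := by
      rw [Equiv.symm_apply_apply]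
    rw [this]
    exact subset_closure hxy

end Sums

/-- Let `X` be a locally compact, locally-P Tychonoff space, where `P` is a
closed hereditary topological property, and suppose that either `X` is paracompact and `P` is
preserved under locally finite closed sums of subspaces, or `P` is preserved under countable
closed sums of subspaces.  If `Z` is a zero-set of `βX` with `X ∩ Z = ∅`, then
`int_{X*} Z ⊆ λ_P X`, where `X* = βX \ X`. -/
theorem stmt13 {X : Type u} [TopologicalSpace X] [T35Space X] [LocallyCompactSpace X]
    (P : (Z : Type u) → [TopologicalSpace Z] → Prop)
    (hProp : TopProperty P) (hHer : ClosedHereditary P) (hloc : LocallyP P X)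
    (hsum : (ParacompactSpace X ∧ LocallyFiniteClosedSums P) ∨ CountableClosedSums P)
    (Z : Set (StoneCech X)) (hZ : IsZeroSet Z)
    (hdisj : Z ∩ Set.range (stoneCechUnit : X → StoneCech X) = ∅) :
    Subtype.val '' interior
        (Subtype.val ⁻¹' Z : Set ↥((Set.range (stoneCechUnit : X → StoneCech X))ᶜ)) ⊆
      lambdaP P X := by
  classical
  rintro _ ⟨q, hq, rfl⟩
  have hXne : Nonempty X := by
    have : Nonempty (StoneCech X) := ⟨q.1⟩
    exact denseRange_stoneCechUnit.nonempty
  have hsum' : LocallyFiniteClosedSums P ∨ CountableClosedSums P := hsum.imp (fun h => h.2) id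
  obtain ⟨F, hF, hZF⟩ := hZ
  have hFpos : ∀ x : X, (0 : ℝ) < F (stoneCechUnit x) := by
    intro x
    rcases lt_or_eq_of_le (F (stoneCechUnit x)).2.1 with h | h
    · exact h
    · exfalso
      have h1 : stoneCechUnit x ∈ Z := by rw [hZF]; exact Subtype.ext h.symm
      have h2 : stoneCechUnit x ∈ Z ∩ range (stoneCechUnit : X → StoneCech X) := ⟨h1, mem_range_self (f := stoneCechUnit) x⟩
      rw [hdisj] at h2
      exact notMem_empty _ h2
  -- extract an open set W of βX witnessing interiority
  obtain ⟨O, hOsub, hOopen, hqO⟩ := mem_interior.1 hq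
  obtain ⟨W, hWopen, hWeq⟩ := isOpen_induced_iff.1 hOopen
  have hpW : q.1 ∈ W := by
    rw [← hWeq] at hqO
    exact hqO
  have hWZ : ∀ y ∈ W, y ∉ range (stoneCechUnit : X → StoneCech X) → y ∈ Z := by
    intro y hyW hyr
    have h1 : (⟨y, hyr⟩ : ↥(range (stoneCechUnit : X → StoneCech X))ᶜ) ∈ O := by
      rw [← hWeq]
      show y ∈ W
      exact hyW
    exact hOsub h1
  -- Urysohn function separating q.1 from Wᶜ
  obtain ⟨g, hg0, hg1, hg01⟩ := exists_continuous_zero_one_of_isClosed hWopen.isClosed_compl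
    isClosed_singleton (disjoint_singleton_right.2 (fun h => h hpW))
  set C : Set X := {x | 1 / 2 < g (stoneCechUnit x)} with hC
  set V : Set (StoneCech X) := g ⁻¹' Ioi (1 / 2) with hV
  have hVopen : IsOpen V := isOpen_Ioi.preimage g.continuous
  have hqV : q.1 ∈ V := by
    have : g q.1 = 1 := hg1 (mem_singleton _)
    simp only [hV, mem_preimage, mem_Ioi, this]
    norm_num
  have hVC : V ∩ range (stoneCechUnit : X → StoneCech X) = stoneCechUnit '' C := by
    ext y
    constructor
    · rintro ⟨hyV, x, rfl⟩
      exact ⟨x, hyV, rfl⟩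
    · rintro ⟨x, hx, rfl⟩
      exact ⟨hx, x, rfl⟩
  have hVK : V ⊆ closure (stoneCechUnit '' C) := by
    intro y hy
    have h1 : y ∈ closure (V ∩ range (stoneCechUnit : X → StoneCech X)) :=
      hVopen.inter_closure ⟨hy, by simp [denseRange_stoneCechUnit.closure_range]⟩
    rwa [hVC] at h1
  have hpint : q.1 ∈ interior (closure (stoneCechUnit '' C)) := mem_interior.2 ⟨V, hVK, hVopen, hqV⟩
  have hKW : closure (stoneCechUnit '' C) ⊆ W := by
    have h1 : stoneCechUnit '' C ⊆ {y | 1 / 2 ≤ g y} := by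
      rintro _ ⟨x, hx, rfl⟩
      exact (show (1 : ℝ) / 2 < g (stoneCechUnit x) from hx).le
    have h2 : IsClosed {y | 1 / 2 ≤ g y} := isClosed_le continuous_const g.continuous
    intro y hy
    have h3 : 1 / 2 ≤ g y := closure_minimal h1 h2 hy
    by_contra hyW
    have h4 : g y = 0 := hg0 hyW
    rw [h4] at h3
    norm_num at h3
  have hKZ : ∀ y ∈ closure (stoneCechUnit '' C), y ∉ range (stoneCechUnit : X → StoneCech X) → y ∈ Z := fun y hy => hWZ y (hKW hy)
  -- C is a cozero-set
  have hCoz : IsCozeroSet C := by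
    refine ⟨fun x => projIcc (0 : ℝ) 1 zero_le_one (g (stoneCechUnit x) - 1 / 2),
      continuous_projIcc.comp ((g.continuous.comp continuous_stoneCechUnit).sub
        continuous_const), ?_⟩
    ext x
    simp only [hC, mem_setOf_eq, mem_compl_iff, mem_preimage, mem_singleton_iff]
    have h1 : (projIcc (0 : ℝ) 1 zero_le_one (g (stoneCechUnit x) - 1 / 2) = 0) ↔ g (stoneCechUnit x) - 1 / 2 ≤ 0 := by
      rw [show (0 : unitInterval) = ⟨0, left_mem_Icc.mpr zero_le_one⟩ from rfl]
      exact projIcc_eq_left zero_lt_one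
    rw [h1]
    constructor
    · intro h h'
      linarith
    · intro h
      by_contra h'
      exact h (by linarith)
  -- the closure of C in X, and the annuli A n
  set D : Set X := closure C with hD
  set φ : X → ℝ := fun x => (F (stoneCechUnit x) : ℝ) with hφ
  have hφcont : Continuous φ := continuous_subtype_val.comp (hF.comp continuous_stoneCechUnit)
  have hφ1 : ∀ x, φ x ≤ 1 := fun x => (F (stoneCechUnit x)).2.2
  set A : ℕ → Set X := fun n => D ∩ φ ⁻¹' Icc (1 / ((n : ℝ) + 2)) (1 / ((n : ℝ) + 1)) with hA
  have hAclosed : ∀ n, IsClosed (A n) := fun n =>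
    isClosed_closure.inter (isClosed_Icc.preimage hφcont)
  have hAD : ∀ n, A n ⊆ D := fun n => inter_subset_left
  have hADcover : ∀ x ∈ D, ∃ n, x ∈ A n := by
    intro x hx
    have ht : 0 < φ x := hFpos x
    have hex : ∃ n : ℕ, 1 / ((n : ℝ) + 2) ≤ φ x := by
      obtain ⟨m, hm⟩ := exists_nat_ge (1 / φ x)
      exact ⟨m, by rw [one_div_le (by positivity) ht]; linarith⟩
    set n := Nat.find hex with hn
    have hub : φ x ≤ 1 / ((n : ℝ) + 1) := by
      rcases Nat.eq_zero_or_pos n with h0 | hpos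
      · rw [h0]
        simpa using hφ1 x
      · obtain ⟨k, hk⟩ := Nat.exists_eq_succ_of_ne_zero hpos.ne'
        have h2 := Nat.find_min hex (m := k) (by omega)
        push_neg at h2
        have h3 : φ x ≤ 1 / ((k : ℝ) + 2) := le_of_lt h2
        have h4 : ((k : ℝ) + 2) = (n : ℝ) + 1 := by
          rw [hk]
          push_cast
          ring
        rwa [h4] at h3
    exact ⟨n, hx, Nat.find_spec hex, hub⟩
  -- each A n is compact
  have hAcomp : ∀ n, IsCompact (A n) := by
    intro n
    set L := closure (stoneCechUnit '' A n) with hL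
    have hLsub : L ⊆ closure (stoneCechUnit '' C) ∩ {y | 1 / ((n : ℝ) + 2) ≤ (F y : ℝ)} := by
      apply closure_minimal
      · rintro _ ⟨x, hx, rfl⟩
        refine ⟨?_, hx.2.1⟩
        have h1 : stoneCechUnit x ∈ stoneCechUnit '' D := mem_image_of_mem stoneCechUnit (hAD n hx)
        have h2 : stoneCechUnit '' D ⊆ closure (stoneCechUnit '' C) := by
          rw [hD]
          exact (image_closure_subset_closure_image continuous_stoneCechUnit)
        exact h2 h1
      · exact isClosed_closure.inter
          (isClosed_le continuous_const (continuous_subtype_val.comp hF))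
    have hLrange : L ⊆ range (stoneCechUnit : X → StoneCech X) := by
      intro y hy
      by_contra hyr
      have hyZ : y ∈ Z := hKZ y (hLsub hy).1 hyr
      have h1 : F y = 0 := by
        rw [hZF] at hyZ
        exact hyZ
      have h2 := (hLsub hy).2
      simp only [mem_setOf_eq, h1] at h2
      have h3 : ((0 : unitInterval) : ℝ) = 0 := rfl
      rw [h3] at h2
      have h4 : (0 : ℝ) < 1 / ((n : ℝ) + 2) := by positivity
      linarith
    have hLcomp : IsCompact L := isClosed_closure.isCompact
    have hpre : IsCompact (stoneCechUnit ⁻¹' L) := isInducing_scu.isCompact_preimage' hLcomp hLrange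
    exact IsCompact.of_isClosed_subset hpre (hAclosed n)
      (fun x hx => subset_closure (mem_image_of_mem stoneCechUnit hx))
  have hAP : ∀ n, P ↥(A n) := fun n => compactP hProp hHer hsum' hloc hXne _ (hAcomp n)
  have hGP : ∀ n, P ↥((Subtype.val : ↥D → X) ⁻¹' A n) := by
    intro n
    have h1 : P ↥(D ∩ A n) :=
      hProp _ _ (Homeomorph.setCongr (inter_eq_self_of_subset_right (hAD n)).symm) (hAP n)
    exact hProp _ _ (homeoInter D (A n)).symm h1
  have hGclosed : ∀ n, IsClosed ((Subtype.val : ↥D → X) ⁻¹' A n) := fun n =>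
    (hAclosed n).preimage continuous_subtype_val
  have hGcov : (⋃ n, ((Subtype.val : ↥D → X) ⁻¹' A n)) = univ := by
    ext ⟨x, hx⟩
    simp only [mem_iUnion, mem_preimage, mem_univ, iff_true]
    exact hADcover x hx
  have hPD : P ↥D := by
    rcases hsum' with h | h
    · refine h ↥D (ULift ℕ) (fun i => Subtype.val ⁻¹' A i.down) ?_ (fun i => hGclosed _)
        (fun i => hGP _) ?_
      · rintro ⟨x, hx⟩
        have ht : 0 < φ x := hFpos x
        obtain ⟨m, hm⟩ := exists_nat_gt (2 / φ x)
        refine ⟨{z : ↥D | φ x / 2 < φ z.1}, ?_, ?_⟩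
        · refine (IsOpen.mem_nhds ?_ ?_)
          · exact isOpen_lt continuous_const (hφcont.comp continuous_subtype_val)
          · simp only [mem_setOf_eq]
            linarith
        · refine Set.Finite.subset ((finite_Iio m).preimage
            (Function.Injective.injOn ULift.down_injective)) ?_
          rintro i ⟨z, hzi, hzN⟩
          simp only [mem_preimage, mem_setOf_eq] at hzi hzN ⊢
          have h1 : φ z.1 ≤ 1 / ((i.down : ℝ) + 1) := hzi.2.2
          have h2 : φ x / 2 < 1 / ((i.down : ℝ) + 1) := lt_of_lt_of_le hzN h1
          have h3 : (0 : ℝ) < (i.down : ℝ) + 1 := by positivity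
          have h4 : ((i.down : ℝ) + 1) < 2 / φ x := by
            rw [lt_div_iff₀ ht]
            rw [div_lt_div_iff₀ (by norm_num) h3] at h2
            linarith
          have h5 : (i.down : ℝ) < (m : ℝ) := by linarith
          exact_mod_cast h5
      · rw [← hGcov]
        refine le_antisymm (iUnion_subset fun i => subset_iUnion (fun n : ℕ => (Subtype.val : ↥D → X) ⁻¹' A n) i.down)
          (iUnion_subset fun n => subset_iUnion
            (fun i : ULift.{u} ℕ => (Subtype.val : ↥D → X) ⁻¹' A i.down) ⟨n⟩)
    · exact h ↥D (fun n => Subtype.val ⁻¹' A n) hGclosed hGP hGcov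
  exact mem_iUnion₂.2 ⟨C, ⟨hCoz, hPD⟩, hpint⟩
end
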